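/- Let r ≥ 2, k ≥ 1, R ∈ ℂ[z] nonzero, P(z) = z^r·R(z^k), Q(z) = z^r·R(z)^k, and n ≥ 1. If z₀ ∈ ℂ satisfies P^{∘n}(z₀) = z₀ and z₀ ≠ 0, then Q^{∘n}(z₀^k) = z₀^k and (Q^{∘n})'(z₀^k) = (P^{∘n})'(z₀). -/

import Mathlib

open Polynomial

/-!
The map `z ↦ z^k` semiconjugates `P(z) = z^r R(z^k)` to `Q(z) = z^r R(z)^k`, i.e. `Q ∘ z^k = (z^k) ∘ P`,
hence also `Q^{∘n} ∘ z^k = (z^k) ∘ P^{∘n}`. Evaluating at a fixed point `z₀` of `P^{∘n}` gives the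
fixed point `z₀^k` of `Q^{∘n}`; differentiating by the chain rule gives
`(Q^{∘n})'(z₀^k) · k z₀^{k-1} = k z₀^{k-1} · (P^{∘n})'(z₀)`, and `k z₀^{k-1} ≠ 0` cancels.
-/

noncomputable def polyIter (φ : Polynomial ℂ) (n : ℕ) : Polynomial ℂ :=
  (fun q => φ.comp q)^[n] Polynomial.X

lemma polyIter_zero (φ : ℂ[X]) : polyIter φ 0 = X := rfl

lemma polyIter_succ (φ : ℂ[X]) (n : ℕ) : polyIter φ (n + 1) = φ.comp (polyIter φ n) :=
  Function.iterate_succ_apply' _ n X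

lemma polyIter_comp_of_comp_eq {P Q S : ℂ[X]} (h : Q.comp S = S.comp P) (n : ℕ) :
    (polyIter Q n).comp S = S.comp (polyIter P n) := by
  induction n with
  | zero => simp [polyIter_zero]
  | succ n ih => rw [polyIter_succ, polyIter_succ, comp_assoc, ih, ← comp_assoc, h, comp_assoc]

lemma X_pow_mul_pow_comp_X_pow {A : Type*} [CommSemiring A] (r k : ℕ) (R : A[X]) :
    (X ^ r * R ^ k).comp (X ^ k) = (X ^ k).comp (X ^ r * R.comp (X ^ k)) := by
  simp only [mul_comp, pow_comp, X_comp, mul_pow, ← pow_mul, mul_comm r k]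

lemma eval_derivative_eq_of_comp_eq {A : Type*} [CommRing A] [IsDomain A] {F G S : A[X]}
    (h : F.comp S = S.comp G) {z : A} (hz : G.eval z = z) (hS : (derivative S).eval z ≠ 0) :
    F.eval (S.eval z) = S.eval z ∧ (derivative F).eval (S.eval z) = (derivative G).eval z := by
  have hval := congrArg (eval z) h
  have hder := congrArg (eval z ∘ derivative) h
  simp only [Function.comp_apply, derivative_comp, eval_mul, eval_comp, hz] at hval hder
  exact ⟨hval, mul_left_cancel₀ hS (hder.trans (mul_comm _ _))⟩

theorem stmt12_general (r k : ℕ) (hk : 1 ≤ k) (R : Polynomial ℂ)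
    (n : ℕ) (z₀ : ℂ) (hz₀ : z₀ ≠ 0)
    (hfix : (polyIter (X ^ r * R.comp (X ^ k)) n).eval z₀ = z₀) :
    (polyIter (X ^ r * R ^ k) n).eval (z₀ ^ k) = z₀ ^ k ∧
    (Polynomial.derivative (polyIter (X ^ r * R ^ k) n)).eval (z₀ ^ k)
      = (Polynomial.derivative (polyIter (X ^ r * R.comp (X ^ k)) n)).eval z₀ := by
  have hsemiconj := polyIter_comp_of_comp_eq (X_pow_mul_pow_comp_X_pow r k R) n
  have hnoncrit : (derivative (X ^ k : ℂ[X])).eval z₀ ≠ 0 := by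
    rw [derivative_X_pow, eval_mul, eval_C, eval_pow, eval_X]
    exact mul_ne_zero (Nat.cast_ne_zero.mpr (by omega)) (pow_ne_zero _ hz₀)
  simpa only [eval_pow, eval_X] using eval_derivative_eq_of_comp_eq hsemiconj hfix hnoncrit

/-- If `z₀ ≠ 0` is a fixed point of `P^{∘n}`, then `z₀^k` is a fixed point of
`Q^{∘n}` with the same multiplier. Here `P(z) = z^r·R(z^k)`, `Q(z) = z^r·R(z)^k`. -/
theorem stmt12 (r k : ℕ) (hr : 2 ≤ r) (hk : 1 ≤ k) (R : Polynomial ℂ) (hR : R ≠ 0)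
    (n : ℕ) (hn : 1 ≤ n) (z₀ : ℂ) (hz₀ : z₀ ≠ 0)
    (hfix : (polyIter (X ^ r * R.comp (X ^ k)) n).eval z₀ = z₀) :
    (polyIter (X ^ r * R ^ k) n).eval (z₀ ^ k) = z₀ ^ k ∧
    (Polynomial.derivative (polyIter (X ^ r * R ^ k) n)).eval (z₀ ^ k)
      = (Polynomial.derivative (polyIter (X ^ r * R.comp (X ^ k)) n)).eval z₀ :=
  stmt12_general r k hk R n z₀ hz₀ hfix
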